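/- Let U : ℝ³ → M₂(ℂ) be differentiable with values in SU(2) and satisfy the even reflection symmetry U(r x) = U(x) for all x ∈ ℝ³. Then the baryon number density is odd under the reflection: b(r x) = −b(x) for all x ∈ ℝ³. -/

import Mathlib

open Matrix

attribute [local instance] Matrix.frobeniusNormedAddCommGroup Matrix.frobeniusNormedSpace

/-- Reflection of `ℝ³` across the plane `{x₃ = 0}`: `(x₁, x₂, x₃) ↦ (x₁, x₂, -x₃)`. -/
def reflPlane : (Fin 3 → ℝ) → (Fin 3 → ℝ) := fun x i => if i = 2 then -x i else x i

/-!
Since `U ∘ r = U` and `r` is a linear involution, the chain rule gives `DU(r x) = DU(x) ∘ r`. As `r`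
fixes `e₁, e₂` and negates `e₃`, the currents at `r x` are those at `x` with `L₃` negated, and the
density, being trilinear in `(L₁, L₂, L₃)`, changes sign.
-/

theorem fderiv_apply_map_of_comp_eq {𝕜 E F : Type*} [NontriviallyNormedField 𝕜]
    [NormedAddCommGroup E] [NormedSpace 𝕜 E] [NormedAddCommGroup F] [NormedSpace 𝕜 F]
    (A : E ≃L[𝕜] E) {U : E → F} (hU : U ∘ A = U) (x v : E) :
    fderiv 𝕜 U (A x) (A v) = fderiv 𝕜 U x v := by
  conv_rhs => rw [← hU, A.comp_right_fderiv]
  rfl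

theorem sum_sign_trace_smul_mul {n : Type*} [Fintype n] (c : Fin 3 → ℝ)
    (M : Fin 3 → Matrix n n ℂ) :
    ∑ σ : Equiv.Perm (Fin 3), ((Equiv.Perm.sign σ : ℤ) : ℝ) *
        ((c (σ 0) • M (σ 0) * c (σ 1) • M (σ 1) * c (σ 2) • M (σ 2)).trace).re =
      (∏ i, c i) * ∑ σ : Equiv.Perm (Fin 3), ((Equiv.Perm.sign σ : ℤ) : ℝ) *
        ((M (σ 0) * M (σ 1) * M (σ 2)).trace).re := by
  rw [Finset.mul_sum]
  refine Finset.sum_congr rfl fun σ _ => ?_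
  have hprod : c (σ 0) * c (σ 1) * c (σ 2) = ∏ i, c i := by
    rw [← Equiv.prod_comp σ c, Fin.prod_univ_three]
  simp only [Matrix.smul_mul, Matrix.mul_smul, smul_smul, Matrix.trace_smul, Complex.smul_re,
    smul_eq_mul]
  rw [← hprod]
  ring

theorem reflPlane_involutive : Function.Involutive reflPlane := by
  intro x
  funext i
  by_cases h : i = 2 <;> simp [reflPlane, h]

noncomputable def reflPlaneEquiv : (Fin 3 → ℝ) ≃L[ℝ] (Fin 3 → ℝ) :=
  LinearEquiv.toContinuousLinearEquiv
    { toFun := reflPlane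
      invFun := reflPlane
      map_add' := fun x y => by
        funext i
        by_cases h : i = 2 <;> simp [reflPlane, h, add_comm]
      map_smul' := fun c x => by
        funext i
        by_cases h : i = 2 <;> simp [reflPlane, h]
      left_inv := reflPlane_involutive
      right_inv := reflPlane_involutive }

theorem reflPlaneEquiv_apply (x : Fin 3 → ℝ) : reflPlaneEquiv x = reflPlane x := rfl

def reflSign (i : Fin 3) : ℝ := if i = 2 then -1 else 1

theorem reflPlane_single_one (i : Fin 3) :
    reflPlane (Pi.single i 1) = reflSign i • Pi.single i 1 := by
  funext j
  by_cases hj : j = 2 <;> by_cases hi : i = 2 <;>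
    simp [reflPlane, reflSign, Pi.single_apply, hi, hj]

theorem fderiv_reflPlane_single_one {F : Type*} [NormedAddCommGroup F] [NormedSpace ℝ F]
    {U : (Fin 3 → ℝ) → F} (heven : ∀ x, U (reflPlane x) = U x) (x : Fin 3 → ℝ) (i : Fin 3) :
    fderiv ℝ U (reflPlane x) (Pi.single i 1) =
      reflSign i • fderiv ℝ U x (Pi.single i 1) := by
  have hU : U ∘ reflPlaneEquiv = U := funext heven
  have h := fderiv_apply_map_of_comp_eq reflPlaneEquiv hU x (reflPlane (Pi.single i 1))
  rw [reflPlaneEquiv_apply, reflPlaneEquiv_apply, reflPlane_involutive] at h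
  rw [h, reflPlane_single_one, map_smul]

theorem stmt16 (U : (Fin 3 → ℝ) → Matrix (Fin 2) (Fin 2) ℂ)
    (L : (Fin 3 → ℝ) → Fin 3 → Matrix (Fin 2) (Fin 2) ℂ)
    (hL : ∀ y i, L y i = (U y)ᴴ * fderiv ℝ U y (Pi.single i 1))
    (b : (Fin 3 → ℝ) → ℝ)
    (hb : ∀ x, b x = ∑ σ : Equiv.Perm (Fin 3),
      ((Equiv.Perm.sign σ : ℤ) : ℝ) * ((L x (σ 0) * L x (σ 1) * L x (σ 2)).trace).re)
    (heven : ∀ x, U (reflPlane x) = U x) :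
    ∀ x, b (reflPlane x) = -b x := by
  intro x
  have hLrefl : ∀ i, L (reflPlane x) i = reflSign i • L x i := by
    intro i
    rw [hL, hL, heven, ← Matrix.mul_smul]
    -- `exact`, not `rw`: the lemma's module structure on matrices comes from the Frobenius norm
    exact congrArg _ (fderiv_reflPlane_single_one heven x i)
  have hsign : ∏ i, reflSign i = -1 := by
    simp [reflSign]
  rw [hb, hb]
  simp only [hLrefl]
  rw [sum_sign_trace_smul_mul reflSign, hsign, neg_one_mul]
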